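/- arXiv:2106.10370 — 4 statements merged into one kernel-verified Lean document; each statement's English description precedes it below -/
import Mathlib

section
/- Let F be a finite set of probability distributions on a countable space Z, and let π: F → W be a property mapping into a normed space. Suppose there exists an estimator π̂: Z → W such that for every f ∈ F and z ~ f, Pr(‖π(f) − π̂(z)‖ ≥ ε) ≤ δ. Define the MLE map f_z = argmax_{g ∈ F} g(z). Then for every f ∈ F, Pr_{z~f}(‖π(f) − π(f_z)‖ ≥ 2ε) ≤ (|F| + 1)·δ. -/
open scoped ENNReal

/-!
If the MLE `f_z` is `2ε`-far from the truth `f` in the property `π`, then by the triangle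
inequality the estimate `est z` is `ε`-far from `π f` or from `π f_z`. The first event has
`f`-mass at most `δ`. On the second, `f z ≤ f_z z` lets us charge `z` to the hypothesis
`f_z ∈ F` in which it is a failure, so its `f`-mass is at most the sum over `g ∈ F` of the
`g`-mass of the failure event of `g`, i.e. at most `|F| δ`.
-/

theorem le_norm_sub_or_le_norm_sub_of_two_mul_le {E : Type*} [SeminormedAddCommGroup E]
    {a b c : E} {ε : ℝ} (h : 2 * ε ≤ ‖a - b‖) : ε ≤ ‖a - c‖ ∨ ε ≤ ‖b - c‖ := by
  by_contra! hlt
  have htri := norm_sub_le_norm_sub_add_norm_sub a c b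
  rw [norm_sub_rev c b] at htri
  linarith [hlt.1, hlt.2]

namespace PMF

variable {α : Type*}

theorem toOuterMeasure_setOf (p : PMF α) (P : α → Prop) [DecidablePred P] :
    p.toOuterMeasure {a | P a} = ∑' a, if P a then p a else 0 := by
  simp only [toOuterMeasure_apply, Set.indicator_apply, Set.mem_ofPred_eq]

theorem toOuterMeasure_setOf_mem_mle_le_sum {F : Finset (PMF α)} {mle : α → PMF α}
    (hmle : ∀ a, mle a ∈ F ∧ ∀ g ∈ F, g a ≤ mle a a) (A : PMF α → Set α)
    {f : PMF α} (hf : f ∈ F) :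
    f.toOuterMeasure {a | a ∈ A (mle a)} ≤ ∑ g ∈ F, g.toOuterMeasure (A g) := by
  have pointwise : ∀ a, {a | a ∈ A (mle a)}.indicator f a ≤ ∑ g ∈ F, (A g).indicator g a := by
    intro a
    by_cases ha : a ∈ A (mle a)
    · calc {a | a ∈ A (mle a)}.indicator f a = f a := Set.indicator_of_mem ha f
        _ ≤ mle a a := (hmle a).2 f hf
        _ = (A (mle a)).indicator (mle a) a := (Set.indicator_of_mem ha _).symm
        _ ≤ ∑ g ∈ F, (A g).indicator g a :=
          Finset.single_le_sum (f := fun g => (A g).indicator g a) (fun _ _ => zero_le)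
            (hmle a).1
    · exact (Set.indicator_of_notMem ha f).trans_le zero_le
  simp only [toOuterMeasure_apply]
  rw [← Summable.tsum_finsetSum fun g _ => ENNReal.summable]
  exact ENNReal.tsum_le_tsum pointwise

end PMF

theorem mle_competitive_finite_general
    {Z : Type*} {W : Type*} [NormedAddCommGroup W]
    (F : Finset (PMF Z)) (π : PMF Z → W) (est : Z → W)
    (mle : Z → PMF Z)
    (hmle : ∀ z : Z, mle z ∈ F ∧ ∀ g ∈ F, g z ≤ (mle z) z)
    (ε : ℝ) (δ : ℝ≥0∞)
    (hest : ∀ f ∈ F, (∑' z : Z, if ε ≤ ‖π f - est z‖ then f z else 0) ≤ δ) :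
    ∀ f ∈ F,
      (∑' z : Z, if 2 * ε ≤ ‖π f - π (mle z)‖ then f z else 0)
        ≤ ((F.card : ℝ≥0∞) + 1) * δ := by
  intro f hf
  set fails : PMF Z → Set Z := fun g => {z | ε ≤ ‖π g - est z‖}
  replace hest : ∀ g ∈ F, g.toOuterMeasure (fails g) ≤ δ := fun g hg => by
    rw [PMF.toOuterMeasure_setOf]; exact hest g hg
  have hsplit : {z | 2 * ε ≤ ‖π f - π (mle z)‖} ⊆ fails f ∪ {z | z ∈ fails (mle z)} :=
    fun z hz => le_norm_sub_or_le_norm_sub_of_two_mul_le hz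
  rw [← PMF.toOuterMeasure_setOf]
  calc f.toOuterMeasure {z | 2 * ε ≤ ‖π f - π (mle z)‖}
      ≤ f.toOuterMeasure (fails f) + f.toOuterMeasure {z | z ∈ fails (mle z)} :=
        (MeasureTheory.measure_mono hsplit).trans (MeasureTheory.measure_union_le _ _)
    _ ≤ δ + ∑ g ∈ F, δ :=
        add_le_add (hest f hf) ((PMF.toOuterMeasure_setOf_mem_mle_le_sum hmle fails hf).trans
          (Finset.sum_le_sum hest))
    _ = ((F.card : ℝ≥0∞) + 1) * δ := by rw [Finset.sum_const, nsmul_eq_mul]; ring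

/-- Competitiveness of MLE over a finite family of distributions:
if some estimator `est` estimates a property `π` to accuracy `ε` with failure
probability `δ` for every `f ∈ F`, then the MLE plug-in estimator achieves
accuracy `2ε` with failure probability `(|F| + 1)·δ`. -/
theorem mle_competitive_finite
    {Z : Type*} [Countable Z] {W : Type*} [NormedAddCommGroup W]
    (F : Finset (PMF Z)) (π : PMF Z → W) (est : Z → W)
    (mle : Z → PMF Z)
    (hmle : ∀ z : Z, mle z ∈ F ∧ ∀ g ∈ F, g z ≤ (mle z) z)
    (ε : ℝ) (δ : ℝ≥0∞)
    (hest : ∀ f ∈ F, (∑' z : Z, if ε ≤ ‖π f - est z‖ then f z else 0) ≤ δ) :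
    ∀ f ∈ F,
      (∑' z : Z, if 2 * ε ≤ ‖π f - π (mle z)‖ then f z else 0)
        ≤ ((F.card : ℝ≥0∞) + 1) * δ :=
  mle_competitive_finite_general F π est mle hmle ε δ hest
end

section
/- For the fixed-design Poisson regression family with p(y|x_i;θ) = Poisson(⟨θ,x_i⟩), suppose ‖θ‖₂ ≤ w, ⟨θ,x_i⟩ ≥ γ > 0 and ⟨θ',x_i⟩ ≥ γ for all i, and ‖x_i‖₂ ≤ R. Then the L1 distance between the product distributions over n samples satisfies ‖f(·;θ) − f(·;θ')‖₁ ≤ R√(2nw‖θ−θ'‖₂/γ). -/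
open Real Set Finset InformationTheory
open scoped Nat

/-!
Pinsker's inequality bounds the squared L¹ distance of two distributions by twice their
Kullback–Leibler divergence, and the divergence of two product measures is the sum of the
coordinate divergences, here `a log (a / b) - (a - b)` for `Poisson a` against `Poisson b`.
That term is at most `(a - b)² / b ≤ (a / γ) |a - b|`, and Cauchy–Schwarz gives
`a = ⟪θ, xᵢ⟫ ≤ w R` and `|a - b| = |⟪θ - θ', xᵢ⟫| ≤ ‖θ - θ'‖ R`.
-/

lemma hasDerivAt_add_one_mul_log_sub {t : ℝ} (ht : 0 < t) :
    HasDerivAt (fun s ↦ (s + 1) * log s - 2 * (s - 1)) (log t + t⁻¹ - 1) t := by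
  refine ((((hasDerivAt_id' t).add_const 1).mul (hasDerivAt_log ht.ne')).sub
    (((hasDerivAt_id' t).sub_const 1).const_mul 2)).congr_deriv ?_
  field_simp
  ring

lemma monotoneOn_add_one_mul_log_sub :
    MonotoneOn (fun t ↦ (t + 1) * log t - 2 * (t - 1)) (Ioi 0) := by
  refine monotoneOn_of_hasDerivWithinAt_nonneg (f' := fun t ↦ log t + t⁻¹ - 1) (convex_Ioi 0)
    (fun t ht ↦ (hasDerivAt_add_one_mul_log_sub ht).continuousAt.continuousWithinAt)
    (fun t ht ↦ ?_) (fun t ht ↦ ?_) <;> rw [interior_Ioi] at ht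
  · exact (hasDerivAt_add_one_mul_log_sub ht).hasDerivWithinAt
  · linarith [one_sub_inv_le_log_of_pos ht]

lemma hasDerivAt_two_mul_add_two_mul_klFun_sub {t : ℝ} (ht : 0 < t) :
    HasDerivAt (fun s ↦ 2 * (s + 2) * klFun s - 3 * (s - 1) ^ 2)
      (4 * ((t + 1) * log t - 2 * (t - 1))) t := by
  refine ((((hasDerivAt_id' t).add_const 2).const_mul 2).mul (hasDerivAt_klFun ht.ne')).sub
    ((((hasDerivAt_id' t).sub_const 1).pow 2).const_mul 3) |>.congr_deriv ?_
  rw [klFun_apply]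
  ring

/- The derivative of the gap is `4 ((t + 1) log t - 2 (t - 1))`, which has the sign of `t - 1`. -/
lemma three_mul_sub_one_sq_le_klFun {t : ℝ} (ht : 0 ≤ t) :
    3 * (t - 1) ^ 2 ≤ 2 * (t + 2) * klFun t := by
  set g : ℝ → ℝ := fun s ↦ 2 * (s + 2) * klFun s - 3 * (s - 1) ^ 2
  set g' : ℝ → ℝ := fun s ↦ 4 * ((s + 1) * log s - 2 * (s - 1))
  have hg : Continuous g := by fun_prop
  have hk := monotoneOn_add_one_mul_log_sub
  have hg1 : g 1 = 0 := by simp [g, klFun_one]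
  suffices g 1 ≤ g t by linarith
  rcases le_total t 1 with h | h
  · refine antitoneOn_of_hasDerivWithinAt_nonpos (f' := g') (convex_Icc 0 1) hg.continuousOn
      (fun s hs ↦ ?_) (fun s hs ↦ ?_) ⟨ht, h⟩ ⟨zero_le_one, le_rfl⟩ h <;>
      rw [interior_Icc] at hs
    · exact (hasDerivAt_two_mul_add_two_mul_klFun_sub hs.1).hasDerivWithinAt
    · have := hk hs.1 (mem_Ioi.2 one_pos) hs.2.le
      norm_num at this
      linarith
  · refine monotoneOn_of_hasDerivWithinAt_nonneg (f' := g') (convex_Ici 1) hg.continuousOn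
      (fun s hs ↦ ?_) (fun s hs ↦ ?_) self_mem_Ici h h <;>
      rw [interior_Ici] at hs
    · exact (hasDerivAt_two_mul_add_two_mul_klFun_sub (one_pos.trans hs)).hasDerivWithinAt
    · have := hk (mem_Ioi.2 one_pos) (mem_Ioi.2 (one_pos.trans hs)) hs.le
      norm_num at this
      linarith

lemma three_mul_sub_sq_le_mul_klFun_div {p q : ℝ} (hp : 0 ≤ p) (hq : 0 < q) :
    3 * (p - q) ^ 2 ≤ 2 * (p + 2 * q) * (q * klFun (p / q)) := by
  obtain ⟨t, ht, rfl⟩ : ∃ t, 0 ≤ t ∧ p = t * q := ⟨p / q, div_nonneg hp hq.le, by field_simp⟩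
  rw [mul_div_cancel_right₀ _ hq.ne']
  calc 3 * (t * q - q) ^ 2 = q ^ 2 * (3 * (t - 1) ^ 2) := by ring
    _ ≤ q ^ 2 * (2 * (t + 2) * klFun t) :=
        mul_le_mul_of_nonneg_left (three_mul_sub_one_sq_le_klFun ht) (sq_nonneg q)
    _ = 2 * (t * q + 2 * q) * (q * klFun t) := by ring

lemma mul_klFun_div {p q : ℝ} (hq : q ≠ 0) : q * klFun (p / q) = p * log (p / q) + q - p := by
  rw [klFun_apply]
  field_simp

lemma sq_tsum_abs_le_tsum_sq_div_mul_tsum {α : Type*} {u m : α → ℝ} (hm : ∀ a, 0 < m a)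
    (hu : Summable fun a ↦ u a ^ 2 / m a) (hms : Summable m) :
    (∑' a, |u a|) ^ 2 ≤ (∑' a, u a ^ 2 / m a) * ∑' a, m a := by
  have key := inner_le_Lp_mul_Lq_tsum_of_nonneg .two_two
    (f := fun a ↦ |u a| / √(m a)) (g := fun a ↦ √(m a)) (fun a ↦ by positivity)
    (fun a ↦ sqrt_nonneg _)
    (by simpa only [rpow_two, div_pow, sq_abs, sq_sqrt (hm _).le] using hu)
    (by simpa only [rpow_two, sq_sqrt (hm _).le] using hms)
  simp only [rpow_two, div_pow, sq_abs, sq_sqrt (hm _).le,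
    div_mul_cancel₀ _ (sqrt_ne_zero'.2 (hm _)), ← sqrt_eq_rpow] at key
  calc (∑' a, |u a|) ^ 2 ≤ (√(∑' a, u a ^ 2 / m a) * √(∑' a, m a)) ^ 2 :=
        pow_le_pow_left₀ (tsum_nonneg fun a ↦ abs_nonneg _) key 2
    _ = (∑' a, u a ^ 2 / m a) * ∑' a, m a := by
        rw [mul_pow, sq_sqrt (tsum_nonneg fun a ↦ div_nonneg (sq_nonneg _) (hm a).le),
          sq_sqrt (tsum_nonneg fun a ↦ (hm a).le)]

/- Pinsker's inequality: apply Cauchy–Schwarz with the weights `(P + 2 Q) / 3` suggested by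
`three_mul_sub_sq_le_mul_klFun_div`. -/
lemma sq_tsum_abs_sub_le_two_mul_of_hasSum {α : Type*} {P Q : α → ℝ} (hP0 : ∀ a, 0 ≤ P a)
    (hQ0 : ∀ a, 0 < Q a) (hP : HasSum P 1) (hQ : HasSum Q 1) {K : ℝ}
    (hK : HasSum (fun a ↦ P a * log (P a / Q a)) K) :
    (∑' a, |P a - Q a|) ^ 2 ≤ 2 * K := by
  set m : α → ℝ := fun a ↦ (P a + 2 * Q a) / 3
  have hm0 (a : α) : 0 < m a := by have := hP0 a; have := hQ0 a; positivity
  have hm : HasSum m 1 := by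
    have := (hP.add (hQ.mul_left 2)).div_const 3
    rwa [show ((1 : ℝ) + 2 * 1) / 3 = 1 by norm_num] at this
  have hT : HasSum (fun a ↦ Q a * klFun (P a / Q a)) K := by
    simpa using ((hK.add hQ).sub hP).congr_fun fun a ↦ mul_klFun_div (hQ0 a).ne'
  have hpt (a : α) : (P a - Q a) ^ 2 / m a ≤ 2 * (Q a * klFun (P a / Q a)) := by
    rw [div_le_iff₀ (hm0 a)]
    simp only [m]
    linarith [three_mul_sub_sq_le_mul_klFun_div (hP0 a) (hQ0 a)]
  have hS : Summable fun a ↦ (P a - Q a) ^ 2 / m a :=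
    (hT.summable.mul_left 2).of_nonneg_of_le (fun a ↦ by have := hm0 a; positivity) hpt
  calc (∑' a, |P a - Q a|) ^ 2 ≤ (∑' a, (P a - Q a) ^ 2 / m a) * ∑' a, m a :=
        sq_tsum_abs_le_tsum_sq_div_mul_tsum hm0 hS hm.summable
    _ ≤ 2 * K := by
        rw [hm.tsum_eq, mul_one, ← hT.tsum_eq, ← tsum_mul_left]
        exact hS.tsum_le_tsum hpt (hT.summable.mul_left 2)

section PiProd

variable {β : Type*} {n : ℕ} {f : Fin n → β → ℝ}

lemma hasSum_pi_prod_of_nonneg {s : Fin n → ℝ}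
    (hf : ∀ i b, 0 ≤ f i b) (hs : ∀ i, HasSum (f i) (s i)) :
    HasSum (fun y : Fin n → β ↦ ∏ i, f i (y i)) (∏ i, s i) := by
  induction n with
  | zero => simp
  | succ n ih =>
    have htail := ih (fun i ↦ hf i.succ) (fun i ↦ hs i.succ)
    have htail0 (z : Fin n → β) : 0 ≤ ∏ i, f i.succ (z i) := prod_nonneg fun i _ ↦ hf i.succ (z i)
    have hsum := Summable.mul_of_nonneg (hs 0).summable htail.summable (fun b ↦ hf 0 b) htail0
    have hprod := (hs 0).mul htail hsum
    rw [Fin.prod_univ_succ, ← (Fin.consEquiv fun _ ↦ β).hasSum_iff]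
    simpa [Fin.consEquiv, Fin.prod_univ_succ, Function.comp_def] using hprod

lemma hasSum_apply_mul_pi_prod (hf : ∀ i b, 0 ≤ f i b) (hs : ∀ i, HasSum (f i) 1) {g : β → ℝ}
    (hg : ∀ b, 0 ≤ g b) (j : Fin n) {t : ℝ}
    (hgj : HasSum (fun b ↦ g b * f j b) t) :
    HasSum (fun y : Fin n → β ↦ g (y j) * ∏ i, f i (y i)) t := by
  classical
  have := hasSum_pi_prod_of_nonneg (f := fun i b ↦ (if i = j then g b else 1) * f i b)
    (s := fun i ↦ if i = j then t else 1)
    (fun i b ↦ mul_nonneg (by split_ifs <;> simp [hg]) (hf i b))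
    (fun i ↦ by split_ifs with h <;> [exact h ▸ hgj; simpa using hs i])
  simpa only [prod_mul_distrib, prod_ite_eq', if_pos (Finset.mem_univ j)] using this

end PiProd

/- The Poisson pmf with a real rate, in the form of the statement; Mathlib's `poissonMeasure`
takes rates in `ℝ≥0`. -/
noncomputable def poissonMass (c : ℝ) (k : ℕ) : ℝ := exp (-c) * c ^ k / k !

lemma poissonMass_nonneg {c : ℝ} (hc : 0 ≤ c) (k : ℕ) : 0 ≤ poissonMass c k := by
  unfold poissonMass; positivity

lemma poissonMass_pos {c : ℝ} (hc : 0 < c) (k : ℕ) : 0 < poissonMass c k := by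
  unfold poissonMass; positivity

lemma hasSum_poissonMass {c : ℝ} (hc : 0 ≤ c) : HasSum (poissonMass c) 1 :=
  ProbabilityTheory.hasSum_one_poissonMeasure ⟨c, hc⟩

lemma succ_mul_poissonMass_succ (c : ℝ) (k : ℕ) :
    (k + 1 : ℝ) * poissonMass c (k + 1) = c * poissonMass c k := by
  simp only [poissonMass, Nat.factorial_succ, Nat.cast_mul, pow_succ]
  field_simp
  push_cast
  ring

lemma hasSum_natCast_mul_poissonMass {c : ℝ} (hc : 0 ≤ c) :
    HasSum (fun k : ℕ ↦ k * poissonMass c k) c := by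
  rw [← hasSum_nat_add_iff' 1]
  simpa [succ_mul_poissonMass_succ] using (hasSum_poissonMass hc).mul_left c

lemma log_poissonMass_div {a b : ℝ} (ha : 0 < a) (hb : 0 < b) (k : ℕ) :
    log (poissonMass a k / poissonMass b k) = (b - a) + k * log (a / b) := by
  have : poissonMass a k / poissonMass b k = exp (b - a) * (a / b) ^ k := by
    simp only [poissonMass, exp_sub, exp_neg, div_pow]
    field_simp
  rw [this, log_mul (exp_pos _).ne' (by positivity), log_exp, log_pow]

lemma hasSum_pi_poissonMass {n : ℕ} {a : Fin n → ℝ} (ha : ∀ i, 0 ≤ a i) :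
    HasSum (fun y : Fin n → ℕ ↦ ∏ i, poissonMass (a i) (y i)) 1 := by
  simpa using hasSum_pi_prod_of_nonneg (fun i k ↦ poissonMass_nonneg (ha i) k)
    fun i ↦ hasSum_poissonMass (ha i)

lemma hasSum_pi_poissonMass_mul_log_div {n : ℕ} {a b : Fin n → ℝ} (ha : ∀ i, 0 < a i)
    (hb : ∀ i, 0 < b i) :
    HasSum (fun y : Fin n → ℕ ↦ (∏ i, poissonMass (a i) (y i)) *
        log ((∏ i, poissonMass (a i) (y i)) / ∏ i, poissonMass (b i) (y i)))
      (∑ i, (a i * log (a i / b i) - (a i - b i))) := by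
  set P : (Fin n → ℕ) → ℝ := fun y ↦ ∏ i, poissonMass (a i) (y i)
  have hP : HasSum P 1 := hasSum_pi_poissonMass fun i ↦ (ha i).le
  have hmean (j : Fin n) : HasSum (fun y ↦ (y j : ℝ) * P y) (a j) :=
    hasSum_apply_mul_pi_prod (fun i ↦ poissonMass_nonneg (ha i).le)
      (fun i ↦ hasSum_poissonMass (ha i).le) (fun k ↦ k.cast_nonneg) j
      (hasSum_natCast_mul_poissonMass (ha j).le)
  have hlog (y : Fin n → ℕ) : P y * log (P y / ∏ i, poissonMass (b i) (y i)) =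
      ∑ i, ((b i - a i) * P y + log (a i / b i) * (y i * P y)) := by
    rw [← prod_div_distrib, log_prod fun i _ ↦
      (div_pos (poissonMass_pos (ha i) _) (poissonMass_pos (hb i) _)).ne', mul_sum]
    refine sum_congr rfl fun i _ ↦ ?_
    rw [log_poissonMass_div (ha i) (hb i)]
    ring
  refine HasSum.congr_fun ?_ hlog
  have := hasSum_sum (s := Finset.univ) fun i _ ↦
    (hP.mul_left (b i - a i)).add ((hmean i).mul_left (log (a i / b i)))
  rwa [sum_congr rfl fun i _ ↦ show (b i - a i) * 1 + log (a i / b i) * a i =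
    a i * log (a i / b i) - (a i - b i) by ring] at this

lemma mul_log_div_sub_sub_le_sq_div {a b : ℝ} (ha : 0 < a) (hb : 0 < b) :
    a * log (a / b) - (a - b) ≤ (a - b) ^ 2 / b := by
  have h := mul_le_mul_of_nonneg_left (log_le_sub_one_of_pos (div_pos ha hb)) ha.le
  have e : a * (a / b - 1) - (a - b) = (a - b) ^ 2 / b := by
    field_simp
  linarith

lemma sq_sub_div_le_div_mul_abs_sub {a b γ : ℝ} (hγ : 0 < γ) (ha : γ ≤ a) (hb : γ ≤ b) :
    (a - b) ^ 2 / b ≤ a / γ * |a - b| := by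
  have hab : |a - b| * γ ≤ a * b := by
    rcases le_total b a with h | h
    · rw [abs_of_nonneg (sub_nonneg.2 h)]; nlinarith
    · rw [abs_of_nonpos (sub_nonpos.2 h)]; nlinarith
  rw [div_le_iff₀ (hγ.trans_le hb), div_mul_eq_mul_div, div_mul_eq_mul_div, le_div_iff₀ hγ,
    ← sq_abs]
  nlinarith [mul_le_mul_of_nonneg_left hab (abs_nonneg (a - b))]

lemma inner_mul_log_div_inner_sub_le {E : Type*} [NormedAddCommGroup E] [InnerProductSpace ℝ E]
    {θ θ' x : E} {w γ R : ℝ} (hw : ‖θ‖ ≤ w) (hγ : 0 < γ) (hθ : γ ≤ inner ℝ θ x)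
    (hθ' : γ ≤ inner ℝ θ' x) (hx : ‖x‖ ≤ R) :
    inner ℝ θ x * log (inner ℝ θ x / inner ℝ θ' x) - (inner ℝ θ x - inner ℝ θ' x) ≤
      R ^ 2 * w * ‖θ - θ'‖ / γ := by
  have hmean : inner ℝ θ x ≤ w * R :=
    (real_inner_le_norm θ x).trans (mul_le_mul hw hx (norm_nonneg x) ((norm_nonneg θ).trans hw))
  have hdiff : |inner ℝ θ x - inner ℝ θ' x| ≤ ‖θ - θ'‖ * R := by
    rw [← inner_sub_left]
    exact (abs_real_inner_le_norm _ _).trans (mul_le_mul_of_nonneg_left hx (norm_nonneg _))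
  calc _ ≤ (inner ℝ θ x - inner ℝ θ' x) ^ 2 / inner ℝ θ' x :=
        mul_log_div_sub_sub_le_sq_div (hγ.trans_le hθ) (hγ.trans_le hθ')
    _ ≤ inner ℝ θ x / γ * |inner ℝ θ x - inner ℝ θ' x| := sq_sub_div_le_div_mul_abs_sub hγ hθ hθ'
    _ ≤ w * R / γ * (‖θ - θ'‖ * R) :=
        mul_le_mul (div_le_div_of_nonneg_right hmean hγ.le) hdiff (abs_nonneg _)
          (div_nonneg ((hγ.trans_le hθ).le.trans hmean) hγ.le)
    _ = R ^ 2 * w * ‖θ - θ'‖ / γ := by ring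

/-- L1 distance bound between product Poisson regression distributions in fixed
design: with `p(y|x_i;θ) = Poisson(⟨θ,x_i⟩)`, `‖θ‖₂ ≤ w`, `⟨θ,x_i⟩, ⟨θ',x_i⟩ ≥ γ > 0`
and `‖x_i‖₂ ≤ R`, we have `‖f(·;θ) − f(·;θ')‖₁ ≤ R √(2 n w ‖θ−θ'‖₂ / γ)`. -/
theorem l1_poisson_regression
    {d n : ℕ} (x : Fin n → EuclideanSpace ℝ (Fin d))
    (θ θ' : EuclideanSpace ℝ (Fin d)) (w γ R : ℝ)
    (hw : ‖θ‖ ≤ w) (hγ : 0 < γ)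
    (hθ : ∀ i, γ ≤ (inner ℝ θ (x i) : ℝ))
    (hθ' : ∀ i, γ ≤ (inner ℝ θ' (x i) : ℝ))
    (hR : ∀ i, ‖x i‖ ≤ R) :
    (∑' y : Fin n → ℕ,
        |(∏ i, Real.exp (-(inner ℝ θ (x i) : ℝ)) * (inner ℝ θ (x i) : ℝ) ^ (y i)
             / (Nat.factorial (y i)))
          - ∏ i, Real.exp (-(inner ℝ θ' (x i) : ℝ)) * (inner ℝ θ' (x i) : ℝ) ^ (y i)
             / (Nat.factorial (y i))|)
      ≤ R * Real.sqrt (2 * n * w * ‖θ - θ'‖ / γ) := by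
  set a : Fin n → ℝ := fun i ↦ inner ℝ θ (x i)
  set b : Fin n → ℝ := fun i ↦ inner ℝ θ' (x i)
  have ha i : 0 < a i := hγ.trans_le (hθ i)
  have hb i : 0 < b i := hγ.trans_le (hθ' i)
  change ∑' y : Fin n → ℕ, |∏ i, poissonMass (a i) (y i) - ∏ i, poissonMass (b i) (y i)| ≤ _
  have hpinsker := sq_tsum_abs_sub_le_two_mul_of_hasSum
    (fun y ↦ prod_nonneg fun i _ ↦ (poissonMass_pos (ha i) _).le)
    (fun y ↦ prod_pos fun i _ ↦ poissonMass_pos (hb i) _)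
    (hasSum_pi_poissonMass fun i ↦ (ha i).le) (hasSum_pi_poissonMass fun i ↦ (hb i).le)
    (hasSum_pi_poissonMass_mul_log_div ha hb)
  have hKL : ∑ i, (a i * log (a i / b i) - (a i - b i)) ≤ n * (R ^ 2 * w * ‖θ - θ'‖ / γ) := by
    refine (sum_le_sum fun i _ ↦
      inner_mul_log_div_inner_sub_le hw hγ (hθ i) (hθ' i) (hR i)).trans_eq ?_
    simp
  calc _ ≤ √(R ^ 2 * (2 * n * w * ‖θ - θ'‖ / γ)) := by
        refine le_sqrt_of_sq_le (hpinsker.trans ?_)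
        calc _ ≤ 2 * (n * (R ^ 2 * w * ‖θ - θ'‖ / γ)) := by gcongr
          _ = _ := by ring
    _ = |R| * √(2 * n * w * ‖θ - θ'‖ / γ) := by rw [sqrt_mul (sq_nonneg R), sqrt_sq_eq_abs]
    _ = R * √(2 * n * w * ‖θ - θ'‖ / γ) := by
        rcases Nat.eq_zero_or_pos n with rfl | hn
        · simp
        · rw [abs_of_nonneg ((norm_nonneg _).trans (hR ⟨0, hn⟩))]
end

section
/- For the fixed-design Pareto regression family with p(y|x_i;θ) = Pareto(b, m_i(θ)) where m_i(θ) = ((b−1)/b)⟨θ,x_i⟩, assuming ⟨θ,x_i⟩, ⟨θ',x_i⟩ ≥ γ > 0 and ‖x_i‖₂ ≤ R for all i, the L1 distance between product distributions satisfies ‖f(·;θ) − f(·;θ')‖₁ ≤ √(2bn‖θ−θ'‖₂ R / γ) (whenever all supports are nested so the KL is finite). -/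
/-!
Let `c = (b - 1) / b`. The two product densities have nested supports, and on the support
`A = ∏ᵢ [c⟨θ, xᵢ⟩, ∞)` of the first one the second is smaller, so the L1 distance is
`2 - 2 ∫_A f(·; θ') = 2 - 2 ∏ᵢ (⟨θ', xᵢ⟩ / ⟨θ, xᵢ⟩) ^ b = 2 - 2 exp (-K)`,
where `K = ∑ᵢ b log (⟨θ, xᵢ⟩ / ⟨θ', xᵢ⟩)` is the Kullback–Leibler divergence. The elementary
inequality `(1 - e^{-K})² ≤ K / 2` is Pinsker's inequality in this case, and
`log (⟨θ, xᵢ⟩ / ⟨θ', xᵢ⟩) ≤ ⟨θ - θ', xᵢ⟩ / γ ≤ ‖θ - θ'‖ R / γ` by `log t ≤ t - 1` and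
Cauchy–Schwarz.
-/

open MeasureTheory Set Real Finset
open scoped RealInnerProductSpace

noncomputable def paretoDensity (b m y : ℝ) : ℝ :=
  if m ≤ y then b * m ^ b / y ^ (b + 1) else 0

section ParetoDensity

variable {b m m' : ℝ}

lemma paretoDensity_nonneg (hb : 0 ≤ b) (hm : 0 ≤ m) (y : ℝ) : 0 ≤ paretoDensity b m y := by
  unfold paretoDensity
  split_ifs with hy
  · have : 0 ≤ y := hm.trans hy
    positivity
  · rfl

lemma paretoDensity_le_paretoDensity (hb : 0 ≤ b) (hm' : 0 ≤ m') (hle : m' ≤ m) {y : ℝ} (hy : m ≤ y) :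
    paretoDensity b m' y ≤ paretoDensity b m y := by
  have : 0 ≤ y := hm'.trans (hle.trans hy)
  rw [paretoDensity, paretoDensity, if_pos (hle.trans hy), if_pos hy]
  gcongr

lemma setIntegral_Ici_paretoDensity (hb : 0 < b) (hm' : 0 < m') (hle : m' ≤ m) :
    ∫ y in Ici m, paretoDensity b m' y = (m' / m) ^ b := by
  have hm : 0 < m := hm'.trans_le hle
  have hpow : ∀ y ∈ Ioi m, paretoDensity b m' y = b * m' ^ b * y ^ (-(b + 1)) := by
    intro y hy
    rw [paretoDensity, if_pos (hle.trans (le_of_lt hy)), rpow_neg (hm.trans hy).le,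
      div_eq_mul_inv]
  rw [integral_Ici_eq_integral_Ioi, setIntegral_congr_fun measurableSet_Ioi hpow,
    integral_const_mul, integral_Ioi_rpow_of_lt (by linarith) hm, div_rpow hm'.le hm.le,
    show -(b + 1) + 1 = -b by ring, rpow_neg hm.le]
  field_simp

lemma integral_paretoDensity (hb : 0 < b) (hm : 0 < m) : ∫ y, paretoDensity b m y = 1 := by
  rw [← setIntegral_eq_integral_of_forall_compl_eq_zero (s := Ici m),
    setIntegral_Ici_paretoDensity hb hm le_rfl, div_self hm.ne', one_rpow]
  intro y hy
  exact if_neg hy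

lemma integrable_paretoDensity (hb : 0 < b) (hm : 0 < m) : Integrable (paretoDensity b m) :=
  Integrable.of_integral_ne_zero (by simp [integral_paretoDensity hb hm])

end ParetoDensity

lemma integral_abs_sub_eq_of_le_on {α : Type*} [MeasurableSpace α] {μ : Measure α}
    {f g : α → ℝ} {s : Set α} (hs : MeasurableSet s) (hf : Integrable f μ)
    (hg : Integrable g μ) (hgf : ∀ x ∈ s, g x ≤ f x) (hf0 : ∀ x ∉ s, f x = 0)
    (hg0 : ∀ x ∉ s, 0 ≤ g x) :
    ∫ x, |f x - g x| ∂μ = ∫ x, f x ∂μ + ∫ x, g x ∂μ - 2 * ∫ x in s, g x ∂μ := by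
  have hpt : (fun x => |f x - g x|) = fun x => f x + g x - 2 * s.indicator g x := by
    funext x
    by_cases hx : x ∈ s
    · rw [indicator_of_mem hx, abs_of_nonneg (sub_nonneg.2 (hgf x hx))]
      ring
    · rw [indicator_of_notMem hx, hf0 x hx, zero_sub, abs_neg, abs_of_nonneg (hg0 x hx)]
      ring
  have hfg : Integrable (fun x => f x + g x) μ := hf.add hg
  have hg_s : Integrable (fun x => 2 * s.indicator g x) μ := (hg.indicator hs).const_mul 2
  rw [hpt, integral_sub hfg hg_s, integral_add hf hg, integral_const_mul, integral_indicator hs]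

lemma integral_abs_sub_prod_paretoDensity {ι : Type*} [Fintype ι] {b : ℝ} (hb : 0 < b)
    {m m' : ι → ℝ} (hm' : ∀ i, 0 < m' i) (hle : ∀ i, m' i ≤ m i) :
    ∫ y : ι → ℝ, |∏ i, paretoDensity b (m i) (y i) - ∏ i, paretoDensity b (m' i) (y i)|
      = 2 - 2 * exp (-∑ i, b * log (m i / m' i)) := by
  have hm i : 0 < m i := (hm' i).trans_le (hle i)
  have hint {μ : ι → ℝ} (hμ : ∀ i, 0 < μ i) :
      Integrable (fun y : ι → ℝ => ∏ i, paretoDensity b (μ i) (y i)) :=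
    Integrable.fintype_prod fun i => integrable_paretoDensity hb (hμ i)
  have hmass i : (m' i / m i) ^ b = exp (-(b * log (m i / m' i))) := by
    rw [rpow_def_of_pos (div_pos (hm' i) (hm i)), ← inv_div, log_inv]
    ring_nf
  rw [integral_abs_sub_eq_of_le_on (s := univ.pi fun i => Ici (m i))
      (MeasurableSet.univ_pi fun i => measurableSet_Ici)
      (hint hm) (hint hm'), integral_fintype_prod_volume_eq_prod,
    integral_fintype_prod_volume_eq_prod, volume_pi, Measure.restrict_pi_pi,
    integral_fintype_prod_eq_prod]
  · simp only [integral_paretoDensity hb (hm _), integral_paretoDensity hb (hm' _),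
      setIntegral_Ici_paretoDensity hb (hm' _) (hle _), hmass, prod_const_one, ← exp_sum,
      sum_neg_distrib]
    norm_num
  · intro y hy
    exact prod_le_prod (fun i _ => paretoDensity_nonneg hb.le (hm' i).le _)
      fun i _ => paretoDensity_le_paretoDensity hb.le (hm' i).le (hle i) (hy i (mem_univ i))
  · intro y hy
    obtain ⟨i, -, hi⟩ := not_forall₂.mp hy
    exact prod_eq_zero (mem_univ i) (if_neg hi)
  · exact fun y _ => prod_nonneg fun i _ => paretoDensity_nonneg hb.le (hm' i).le _

/-- Pinsker's inequality when the likelihood ratio takes only the values `0` and `e^K`. -/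
lemma two_sub_two_mul_exp_neg_le_sqrt {K : ℝ} (hK : 0 ≤ K) : 2 - 2 * exp (-K) ≤ √(2 * K) := by
  set φ : ℝ → ℝ := fun t => t / 2 - (1 - exp (-t)) ^ 2
  have hφ t : HasDerivAt φ (1 / 2 - 2 * (1 - exp (-t)) * exp (-t)) t := by
    have he : HasDerivAt (fun s => 1 - exp (-s)) (exp (-t)) t := by
      simpa using ((hasDerivAt_neg t).exp).const_sub 1
    exact (((hasDerivAt_id t).div_const 2).sub (he.pow 2)).congr_deriv (by norm_num)
  have hmono : MonotoneOn φ (Ici 0) := by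
    refine monotoneOn_of_deriv_nonneg (convex_Ici 0) (by fun_prop)
      (fun t _ => (hφ t).differentiableAt.differentiableWithinAt) fun t _ => ?_
    rw [(hφ t).deriv]
    -- `2 u (1 - u) ≤ 1 / 2` for `u = exp (-t)`
    nlinarith [sq_nonneg (2 * exp (-t) - 1)]
  have hsq : (1 - exp (-K)) ^ 2 ≤ K / 2 := by
    have := hmono self_mem_Ici hK hK
    simp only [φ, neg_zero, exp_zero, sub_self] at this
    linarith
  refine le_trans (le_abs_self _) (abs_le_sqrt ?_)
  linarith

lemma log_inner_div_inner_le {E : Type*} [NormedAddCommGroup E] [InnerProductSpace ℝ E]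
    {θ θ' x : E} {γ R : ℝ} (hγ : 0 < γ) (hθ' : γ ≤ ⟪θ', x⟫) (hnested : ⟪θ', x⟫ ≤ ⟪θ, x⟫)
    (hR : ‖x‖ ≤ R) : log (⟪θ, x⟫ / ⟪θ', x⟫) ≤ ‖θ - θ'‖ * R / γ := by
  have hpos : 0 < ⟪θ', x⟫ := hγ.trans_le hθ'
  calc log (⟪θ, x⟫ / ⟪θ', x⟫) ≤ ⟪θ, x⟫ / ⟪θ', x⟫ - 1 :=
        log_le_sub_one_of_pos (div_pos (hpos.trans_le hnested) hpos)
    _ = ⟪θ - θ', x⟫ / ⟪θ', x⟫ := by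
        rw [inner_sub_left]
        field_simp
    _ ≤ ⟪θ - θ', x⟫ / γ :=
        div_le_div_of_nonneg_left (by rw [inner_sub_left]; linarith) hγ hθ'
    _ ≤ ‖θ - θ'‖ * R / γ := by
        gcongr
        exact (real_inner_le_norm _ _).trans (by gcongr)

theorem l1_pareto_regression_general
    {d n : ℕ} (x : Fin n → EuclideanSpace ℝ (Fin d))
    (θ θ' : EuclideanSpace ℝ (Fin d)) (b γ R : ℝ)
    (hb : 1 < b) (hγ : 0 < γ)
    (hθ' : ∀ i, γ ≤ (inner ℝ θ' (x i) : ℝ))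
    (hnested : ∀ i, (inner ℝ θ' (x i) : ℝ) ≤ (inner ℝ θ (x i) : ℝ))
    (hR : ∀ i, ‖x i‖ ≤ R) :
    (∫ y : Fin n → ℝ,
        |(∏ i, if ((b - 1) / b) * (inner ℝ θ (x i) : ℝ) ≤ y i then
              b * (((b - 1) / b) * (inner ℝ θ (x i) : ℝ)) ^ b / (y i) ^ (b + 1)
            else 0)
          - ∏ i, if ((b - 1) / b) * (inner ℝ θ' (x i) : ℝ) ≤ y i then
              b * (((b - 1) / b) * (inner ℝ θ' (x i) : ℝ)) ^ b / (y i) ^ (b + 1)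
            else 0|)
      ≤ Real.sqrt (2 * b * n * ‖θ - θ'‖ * R / γ) := by
  have hc : 0 < (b - 1) / b := div_pos (by linarith) (by linarith)
  have hpos i : 0 < ⟪θ', x i⟫ := hγ.trans_le (hθ' i)
  have hKL i : b * log ((b - 1) / b * ⟪θ, x i⟫ / ((b - 1) / b * ⟪θ', x i⟫))
      = b * log (⟪θ, x i⟫ / ⟪θ', x i⟫) := by
    rw [mul_div_mul_left _ _ hc.ne']
  have hKL_nonneg : 0 ≤ ∑ i, b * log (⟪θ, x i⟫ / ⟪θ', x i⟫) :=
    sum_nonneg fun i _ => mul_nonneg (by linarith)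
      (log_nonneg ((one_le_div (hpos i)).mpr (hnested i)))
  have hKL_le : ∑ i, b * log (⟪θ, x i⟫ / ⟪θ', x i⟫) ≤ n * (b * (‖θ - θ'‖ * R / γ)) := by
    calc ∑ i, b * log (⟪θ, x i⟫ / ⟪θ', x i⟫) ≤ ∑ _i : Fin n, b * (‖θ - θ'‖ * R / γ) :=
          sum_le_sum fun i _ => mul_le_mul_of_nonneg_left
            (log_inner_div_inner_le hγ (hθ' i) (hnested i) (hR i)) (by linarith)
      _ = n * (b * (‖θ - θ'‖ * R / γ)) := by simp
  calc _ = 2 - 2 * exp (-∑ i, b * log (⟪θ, x i⟫ / ⟪θ', x i⟫)) := by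
        rw [← sum_congr rfl fun i _ => hKL i]
        exact integral_abs_sub_prod_paretoDensity (by linarith) (fun i => mul_pos hc (hpos i))
          fun i => mul_le_mul_of_nonneg_left (hnested i) hc.le
    _ ≤ √(2 * ∑ i, b * log (⟪θ, x i⟫ / ⟪θ', x i⟫)) := two_sub_two_mul_exp_neg_le_sqrt hKL_nonneg
    _ ≤ √(2 * b * n * ‖θ - θ'‖ * R / γ) := by
        gcongr
        linarith [show 2 * b * n * ‖θ - θ'‖ * R / γ = 2 * (n * (b * (‖θ - θ'‖ * R / γ))) by ring]

/-- L1 distance bound between product Pareto regression distributions in fixed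
design: with `p(y|x_i;θ) = Pareto(b, m_i(θ))`, `m_i(θ) = ((b−1)/b)⟨θ,x_i⟩`,
`⟨θ,x_i⟩, ⟨θ',x_i⟩ ≥ γ > 0`, `‖x_i‖₂ ≤ R`, and nested supports
(`⟨θ',x_i⟩ ≤ ⟨θ,x_i⟩` for all `i`), we have
`‖f(·;θ) − f(·;θ')‖₁ ≤ √(2 b n ‖θ−θ'‖₂ R / γ)`. -/
theorem l1_pareto_regression
    {d n : ℕ} (x : Fin n → EuclideanSpace ℝ (Fin d))
    (θ θ' : EuclideanSpace ℝ (Fin d)) (b γ R : ℝ)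
    (hb : 1 < b) (hγ : 0 < γ)
    (hθ : ∀ i, γ ≤ (inner ℝ θ (x i) : ℝ))
    (hθ' : ∀ i, γ ≤ (inner ℝ θ' (x i) : ℝ))
    (hnested : ∀ i, (inner ℝ θ' (x i) : ℝ) ≤ (inner ℝ θ (x i) : ℝ))
    (hR : ∀ i, ‖x i‖ ≤ R) :
    (∫ y : Fin n → ℝ,
        |(∏ i, if ((b - 1) / b) * (inner ℝ θ (x i) : ℝ) ≤ y i then
              b * (((b - 1) / b) * (inner ℝ θ (x i) : ℝ)) ^ b / (y i) ^ (b + 1)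
            else 0)
          - ∏ i, if ((b - 1) / b) * (inner ℝ θ' (x i) : ℝ) ≤ y i then
              b * (((b - 1) / b) * (inner ℝ θ' (x i) : ℝ)) ^ b / (y i) ^ (b + 1)
            else 0|)
      ≤ Real.sqrt (2 * b * n * ‖θ - θ'‖ * R / γ) :=
  l1_pareto_regression_general x θ θ' b γ R hb hγ hθ' hnested hR
end

section
/- Let y_i ~ Poisson(μ_i) independently with μ_i ≥ γ > 0 for all i, and let Z = Σ_i (y_i − μ_i) x_i with x_i ∈ ℝ. Then E[Z⁴] ≤ (3 + 1/γ)·(E[Z²])², i.e., Z is hyper-contractive with η⁴ = 3 + 1/γ. -/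
/-!
For independent centred `X`, `Y` with finite fourth moments, expanding `(X + Y)⁴` leaves
`E X⁴ + 6 E X² E Y² + E Y⁴` and `E (X + Y)² = E X² + E Y²`. Hence a bound `E X⁴ ≤ C (E X²)²`
passes from the summands to their sum as soon as `6 ≤ 2C`, i.e. `C ≥ 3`. For a single
`N ~ Poisson(r)` the factorial moments are `E[N(N-1)⋯(N-k+1)] = r ^ k`, which give
`E (N - r)² = r` and `E (N - r)⁴ = 3r² + r ≤ (3 + 1/γ) r²` when `r ≥ γ`.
-/

open MeasureTheory ProbabilityTheory Real
open scoped NNReal ENNReal Nat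

section Moments

variable {Ω : Type*} [MeasurableSpace Ω] {P : Measure Ω} {X Y : Ω → ℝ}

lemma MeasureTheory.MemLp.integrable_pow_of_le [IsFiniteMeasure P] {p k : ℕ} (hX : MemLp X p P)
    (hk : k ≤ p) : Integrable (fun ω => X ω ^ k) P := by
  have h := (hX.mono_exponent (by exact_mod_cast hk : (k : ℝ≥0∞) ≤ p)).integrable_norm_pow'
  have hmeas : AEStronglyMeasurable (fun ω => X ω ^ k) P := hX.aestronglyMeasurable.pow k
  exact (integrable_norm_iff hmeas).1 (by simpa only [norm_pow] using h)

lemma ProbabilityTheory.IndepFun.integral_add_pow [IsFiniteMeasure P] {k : ℕ}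
    (hXY : IndepFun X Y P) (hX : MemLp X k P) (hY : MemLp Y k P) :
    ∫ ω, (X ω + Y ω) ^ k ∂P =
      ∑ j ∈ Finset.range (k + 1), (∫ ω, X ω ^ j ∂P) * (∫ ω, Y ω ^ (k - j) ∂P) * k.choose j := by
  have hterm : ∀ j ∈ Finset.range (k + 1),
      Integrable (fun ω => X ω ^ j * Y ω ^ (k - j) * k.choose j) P := fun j hj =>
    ((hXY.comp (measurable_id.pow_const j) (measurable_id.pow_const (k - j))).integrable_mul
      (hX.integrable_pow_of_le (Finset.mem_range_succ_iff.1 hj))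
      (hY.integrable_pow_of_le (Nat.sub_le k j))).mul_const _
  simp_rw [add_pow]
  rw [integral_finsetSum _ hterm]
  refine Finset.sum_congr rfl fun j _ => ?_
  rw [integral_mul_const, hXY.integral_fun_comp_mul_comp (f := (· ^ j)) (g := (· ^ (k - j)))
    hX.aestronglyMeasurable.aemeasurable hY.aestronglyMeasurable.aemeasurable
    (by fun_prop) (by fun_prop)]

variable [IsProbabilityMeasure P]

lemma ProbabilityTheory.IndepFun.integral_add_sq (hXY : IndepFun X Y P) (hX : MemLp X 2 P)
    (hY : MemLp Y 2 P) (hX₀ : ∫ ω, X ω ∂P = 0) :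
    ∫ ω, (X ω + Y ω) ^ 2 ∂P = ∫ ω, X ω ^ 2 ∂P + ∫ ω, Y ω ^ 2 ∂P := by
  rw [hXY.integral_add_pow hX hY]
  simp only [Nat.reduceAdd, Nat.reduceSub, Finset.sum_range_succ, Finset.sum_range_zero, pow_zero,
    pow_one, integral_const, probReal_univ, smul_eq_mul, Nat.choose, hX₀]
  ring

lemma ProbabilityTheory.IndepFun.integral_add_pow_four (hXY : IndepFun X Y P) (hX : MemLp X 4 P)
    (hY : MemLp Y 4 P) (hX₀ : ∫ ω, X ω ∂P = 0) (hY₀ : ∫ ω, Y ω ∂P = 0) :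
    ∫ ω, (X ω + Y ω) ^ 4 ∂P =
      ∫ ω, X ω ^ 4 ∂P + 6 * (∫ ω, X ω ^ 2 ∂P) * (∫ ω, Y ω ^ 2 ∂P) + ∫ ω, Y ω ^ 4 ∂P := by
  rw [hXY.integral_add_pow hX hY]
  simp only [Nat.reduceAdd, Nat.reduceSub, Finset.sum_range_succ, Finset.sum_range_zero, pow_zero,
    pow_one, integral_const, probReal_univ, smul_eq_mul, Nat.choose, hX₀, hY₀]
  ring

lemma ProbabilityTheory.IndepFun.integral_add_pow_four_le {C : ℝ} (hC : 3 ≤ C)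
    (hXY : IndepFun X Y P) (hX : MemLp X 4 P) (hY : MemLp Y 4 P)
    (hX₀ : ∫ ω, X ω ∂P = 0) (hY₀ : ∫ ω, Y ω ∂P = 0)
    (hX₄ : ∫ ω, X ω ^ 4 ∂P ≤ C * (∫ ω, X ω ^ 2 ∂P) ^ 2)
    (hY₄ : ∫ ω, Y ω ^ 4 ∂P ≤ C * (∫ ω, Y ω ^ 2 ∂P) ^ 2) :
    ∫ ω, (X ω + Y ω) ^ 4 ∂P ≤ C * (∫ ω, (X ω + Y ω) ^ 2 ∂P) ^ 2 := by
  have h24 : (2 : ℝ≥0∞) ≤ 4 := by norm_num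
  rw [hXY.integral_add_pow_four hX hY hX₀ hY₀,
    hXY.integral_add_sq (hX.mono_exponent h24) (hY.mono_exponent h24) hX₀]
  have hX₂ : 0 ≤ ∫ ω, X ω ^ 2 ∂P := integral_nonneg fun ω => sq_nonneg _
  have hY₂ : 0 ≤ ∫ ω, Y ω ^ 2 ∂P := integral_nonneg fun ω => sq_nonneg _
  nlinarith [mul_nonneg hX₂ hY₂]

lemma ProbabilityTheory.iIndepFun.integral_sum_pow_four_le {ι : Type*} {X : ι → Ω → ℝ} {C : ℝ}
    (hC : 3 ≤ C) (hindep : iIndepFun X P) (hX : ∀ i, MemLp (X i) 4 P)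
    (hX₀ : ∀ i, ∫ ω, X i ω ∂P = 0) (hX₄ : ∀ i, ∫ ω, X i ω ^ 4 ∂P ≤ C * (∫ ω, X i ω ^ 2 ∂P) ^ 2)
    (s : Finset ι) :
    ∫ ω, (∑ i ∈ s, X i ω) ^ 4 ∂P ≤ C * (∫ ω, (∑ i ∈ s, X i ω) ^ 2 ∂P) ^ 2 := by
  classical
  induction s using Finset.induction_on with
  | empty => simp
  | insert i s hi ih =>
    have hindep_s : IndepFun (X i) (fun ω => ∑ j ∈ s, X j ω) P := by
      rw [← Finset.sum_fn]
      exact (hindep.indepFun_finsetSum_of_notMem₀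
        (fun j => (hX j).aestronglyMeasurable.aemeasurable) hi).symm
    simp only [Finset.sum_insert hi]
    refine hindep_s.integral_add_pow_four_le hC (hX i) (memLp_finsetSum s fun j _ => hX j)
      (hX₀ i) ?_ (hX₄ i) ih
    rw [integral_finsetSum s fun j _ => (hX j).integrable (by norm_num)]
    exact Finset.sum_eq_zero fun j _ => hX₀ j

end Moments

lemma Nat.cast_descFactorial_eq_prod_range {R : Type*} [CommRing R] (n k : ℕ) :
    (n.descFactorial k : R) = ∏ j ∈ Finset.range k, ((n : R) - j) := by
  rw [← descPochhammer_eval_eq_descFactorial, descPochhammer_eval_eq_prod_range]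

namespace ProbabilityTheory

lemma hasSum_descFactorial_poissonMeasure (r : ℝ≥0) (k : ℕ) :
    HasSum (fun n : ℕ => exp (-r) * r ^ n / n ! * n.descFactorial k) ((r : ℝ) ^ k) := by
  rw [← hasSum_nat_add_iff' k]
  have hvanish : ∑ n ∈ Finset.range k, exp (-r) * r ^ n / n ! * (n.descFactorial k : ℝ) = 0 :=
    Finset.sum_eq_zero fun n hn => by simp [Nat.descFactorial_of_lt (Finset.mem_range.1 hn)]
  have hshift (m : ℕ) : exp (-r) * r ^ (m + k) / (m + k) ! * ((m + k).descFactorial k : ℝ) =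
      (r : ℝ) ^ k * (exp (-r) * r ^ m / m !) := by
    have h := Nat.factorial_mul_descFactorial (Nat.le_add_left k m)
    rw [Nat.add_sub_cancel] at h
    rw [← (by exact_mod_cast h : (m ! : ℝ) * (m + k).descFactorial k = (m + k) !), pow_add]
    field_simp
  simp only [hvanish, sub_zero, hshift]
  simpa using (hasSum_one_poissonMeasure r).mul_left ((r : ℝ) ^ k)

lemma hasSum_sum_descFactorial_poissonMeasure (r : ℝ≥0) {m : ℕ} (a : Fin m → ℝ) :
    HasSum (fun n : ℕ => exp (-r) * r ^ n / n ! * ∑ k, a k * n.descFactorial k)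
      (∑ k, a k * (r : ℝ) ^ (k : ℕ)) := by
  simp_rw [Finset.mul_sum]
  refine hasSum_sum fun k _ => ?_
  simpa only [mul_left_comm] using (hasSum_descFactorial_poissonMeasure r k).mul_left (a k)

lemma hasSum_sub_poissonMeasure (r : ℝ≥0) :
    HasSum (fun n : ℕ => exp (-r) * r ^ n / n ! * ((n : ℝ) - r)) 0 := by
  convert hasSum_sum_descFactorial_poissonMeasure r ![-r, 1] using 1
  · ext n
    congr 1
    simp only [Fin.sum_univ_succ, Fin.sum_univ_zero, Matrix.cons_val_zero, Matrix.cons_val_succ,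
      Fin.val_zero, Fin.val_succ, Nat.cast_descFactorial_eq_prod_range, Finset.prod_range_succ,
      Finset.prod_range_zero]
    push_cast
    ring
  · simp only [Fin.sum_univ_succ, Fin.sum_univ_zero, Matrix.cons_val_zero, Matrix.cons_val_succ,
      Fin.val_zero, Fin.val_succ]
    ring

lemma hasSum_sub_sq_poissonMeasure (r : ℝ≥0) :
    HasSum (fun n : ℕ => exp (-r) * r ^ n / n ! * ((n : ℝ) - r) ^ 2) r := by
  convert hasSum_sum_descFactorial_poissonMeasure r ![r ^ 2, 1 - 2 * r, 1] using 1
  · ext n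
    congr 1
    simp only [Fin.sum_univ_succ, Fin.sum_univ_zero, Matrix.cons_val_zero, Matrix.cons_val_succ,
      Fin.val_zero, Fin.val_succ, Nat.cast_descFactorial_eq_prod_range, Finset.prod_range_succ,
      Finset.prod_range_zero]
    push_cast
    ring
  · simp only [Fin.sum_univ_succ, Fin.sum_univ_zero, Matrix.cons_val_zero, Matrix.cons_val_succ,
      Fin.val_zero, Fin.val_succ]
    ring

lemma hasSum_sub_pow_four_poissonMeasure (r : ℝ≥0) :
    HasSum (fun n : ℕ => exp (-r) * r ^ n / n ! * ((n : ℝ) - r) ^ 4) (3 * r ^ 2 + r) := by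
  convert hasSum_sum_descFactorial_poissonMeasure r
    ![r ^ 4, 1 - 4 * r + 6 * r ^ 2 - 4 * r ^ 3, 7 - 12 * r + 6 * r ^ 2, 6 - 4 * r, 1] using 1
  · ext n
    congr 1
    simp only [Fin.sum_univ_succ, Fin.sum_univ_zero, Matrix.cons_val_zero, Matrix.cons_val_succ,
      Fin.val_zero, Fin.val_succ, Nat.cast_descFactorial_eq_prod_range, Finset.prod_range_succ,
      Finset.prod_range_zero]
    push_cast
    ring
  · simp only [Fin.sum_univ_succ, Fin.sum_univ_zero, Matrix.cons_val_zero, Matrix.cons_val_succ,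
      Fin.val_zero, Fin.val_succ]
    ring

lemma integral_poissonMeasure_eq_of_hasSum {r : ℝ≥0} {f : ℕ → ℝ} {a : ℝ}
    (h : HasSum (fun n => exp (-r) * r ^ n / n ! * f n) a) : ∫ n, f n ∂poissonMeasure r = a := by
  rw [integral_poissonMeasure, ← h.tsum_eq]
  rfl

lemma memLp_four_sub_poissonMeasure (r : ℝ≥0) :
    MemLp (fun n : ℕ => (n : ℝ) - r) 4 (poissonMeasure r) := by
  rw [← integrable_norm_rpow_iff .of_discrete (by norm_num) (by norm_num),
    integrable_poissonMeasure_iff]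
  refine (hasSum_sub_pow_four_poissonMeasure r).summable.congr fun n => ?_
  norm_num [Even.pow_abs]

lemma integral_sub_mul_poissonMeasure (r : ℝ≥0) (c : ℝ) :
    ∫ n : ℕ, ((n : ℝ) - r) * c ∂poissonMeasure r = 0 := by
  rw [integral_mul_const, integral_poissonMeasure_eq_of_hasSum (hasSum_sub_poissonMeasure r),
    zero_mul]

lemma integral_sub_mul_pow_four_le_poissonMeasure {r : ℝ≥0} {γ : ℝ} (hγ : 0 < γ) (hr : γ ≤ r)
    (c : ℝ) :
    ∫ n : ℕ, (((n : ℝ) - r) * c) ^ 4 ∂poissonMeasure r ≤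
      (3 + 1 / γ) * (∫ n : ℕ, (((n : ℝ) - r) * c) ^ 2 ∂poissonMeasure r) ^ 2 := by
  simp_rw [mul_pow]
  rw [integral_mul_const, integral_mul_const,
    integral_poissonMeasure_eq_of_hasSum (hasSum_sub_pow_four_poissonMeasure r),
    integral_poissonMeasure_eq_of_hasSum (hasSum_sub_sq_poissonMeasure r)]
  have hr_le : (r : ℝ) ≤ 1 / γ * r ^ 2 := by
    rw [one_div_mul_eq_div, le_div_iff₀ hγ]
    nlinarith
  nlinarith [pow_nonneg (sq_nonneg c) 2]

end ProbabilityTheory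

/-- Hyper-contractivity of `Z = Σᵢ (yᵢ − μᵢ) xᵢ` for independent
`yᵢ ~ Poisson(μᵢ)` with `μᵢ ≥ γ > 0`:
`E[Z⁴] ≤ (3 + 1/γ) (E[Z²])²`. -/
theorem poisson_linear_combination_hypercontractive
    {n : ℕ} (μ : Fin n → NNReal) (x : Fin n → ℝ) (γ : ℝ)
    (hγ : 0 < γ) (hμ : ∀ i, γ ≤ (μ i : ℝ)) :
    (∫ y : Fin n → ℕ, (∑ i, ((y i : ℝ) - (μ i : ℝ)) * x i) ^ 4
        ∂(Measure.pi fun i => poissonMeasure (μ i)))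
      ≤ (3 + 1 / γ) *
        (∫ y : Fin n → ℕ, (∑ i, ((y i : ℝ) - (μ i : ℝ)) * x i) ^ 2
          ∂(Measure.pi fun i => poissonMeasure (μ i))) ^ 2 := by
  let W (i : Fin n) (a : ℕ) : ℝ := ((a : ℝ) - μ i) * x i
  have hindep : iIndepFun (fun i y => W i (y i)) (Measure.pi fun i => poissonMeasure (μ i)) :=
    iIndepFun_pi fun _ => .of_discrete
  have hmem (i : Fin n) : MemLp (fun y : Fin n → ℕ => W i (y i)) 4
      (Measure.pi fun i => poissonMeasure (μ i)) :=
    ((memLp_four_sub_poissonMeasure (μ i)).mul_const (x i)).comp_measurePreserving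
      (measurePreserving_eval _ i)
  refine hindep.integral_sum_pow_four_le (le_add_of_nonneg_right (by positivity)) hmem
    (fun i => ?_) (fun i => ?_) _
  · rw [integral_comp_eval (X := fun _ => ℕ) (f := W i) .of_discrete]
    exact integral_sub_mul_poissonMeasure (μ i) (x i)
  · rw [integral_comp_eval (X := fun _ => ℕ) (f := fun a => W i a ^ 4) .of_discrete,
      integral_comp_eval (X := fun _ => ℕ) (f := fun a => W i a ^ 2) .of_discrete]
    exact integral_sub_mul_pow_four_le_poissonMeasure hγ (hμ i) (x i)
end
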